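/- arXiv:2403.12557 — 2 statements merged into one kernel-verified Lean document; each statement's English description precedes it below -/
import Mathlib

section
/- Let f : ℝ² → ℝ be convex with all subgradients on a ball bounded in absolute value by C. If u : ℤ → ℝ satisfies the one-sided second-difference bound u(i−1) − 2u(i) + u(i+1) ≤ w·Δx² for all i (discrete semi-concavity), and |u(i+1) − u(i)| ≤ L·Δx for all i, then for every i, f((u(i)−u(i−1))/Δx, (u(i+1)−u(i))/Δx) ≥ f(p,p) − Δx·w·C where p = (u(i)−u(i−1))/Δx; consequently if f(p,p) ≥ 0 for all |p| ≤ L, then f((u(i)−u(i−1))/Δx, (u(i+1)−u(i))/Δx) ≥ −Δx·w·C. -/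
lemma exists_subgrad {f : ℝ × ℝ → ℝ} (hconv : ConvexOn ℝ Set.univ f) (x : ℝ × ℝ) :
    ∃ dp dq : ℝ, ∀ p' q' : ℝ,
      f x + dp * (p' - x.1) + dq * (q' - x.2) ≤ f (p', q') := by
  have hcont : Continuous f :=
    continuousOn_univ.mp (hconv.continuousOn isOpen_univ)
  set t : Set ((ℝ × ℝ) × ℝ) := {z | f z.1 < z.2} with ht
  have htconv : Convex ℝ t := by
    have := hconv.convex_strict_epigraph
    simpa [t, Set.setOf_and] using this
  have htopen : IsOpen t := isOpen_lt (hcont.comp continuous_fst) continuous_snd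
  have hnotin : (x, f x) ∉ t := by simp [t]
  obtain ⟨ℓ, hℓ⟩ := geometric_hahn_banach_point_open htconv htopen hnotin
  set s : ℝ := ℓ ((0, 0), 1) with hs
  have hℓeval : ∀ (y : ℝ × ℝ) (r : ℝ), ℓ (y, r) = ℓ (y, 0) + r * s := by
    intro y r
    have : ((y, r) : (ℝ × ℝ) × ℝ) = (y, 0) + r • (((0 : ℝ), (0 : ℝ)), (1 : ℝ)) := by
      simp [Prod.ext_iff]
    rw [this, map_add, map_smul, smul_eq_mul, hs]
  have hspos : 0 < s := by
    have h1 : ℓ ((x, f x + 1)) > ℓ (x, f x) := hℓ _ (by simp [t])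
    rw [hℓeval x (f x + 1), hℓeval x (f x)] at h1
    nlinarith
  have key : ∀ y : ℝ × ℝ, ℓ (x, 0) + f x * s ≤ ℓ (y, 0) + f y * s := by
    intro y
    by_contra h
    push_neg at h
    set ε : ℝ := ((ℓ (x, 0) + f x * s) - (ℓ (y, 0) + f y * s)) / (2 * s) with hε
    have h2s : (0:ℝ) < 2 * s := by linarith
    have hεpos : 0 < ε := div_pos (by linarith) h2s
    have h3 := hℓ (y, f y + ε) (by simp [t, hεpos])
    rw [hℓeval y (f y + ε), hℓeval x (f x)] at h3
    have hεs : ε * (2 * s) = (ℓ (x, 0) + f x * s) - (ℓ (y, 0) + f y * s) := by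
      rw [hε]; field_simp
    nlinarith
  have hy0 : ∀ y : ℝ × ℝ, ℓ (y, 0) = y.1 * ℓ ((1, 0), 0) + y.2 * ℓ ((0, 1), 0) := by
    intro y
    have : ((y, (0:ℝ)) : (ℝ × ℝ) × ℝ)
        = y.1 • (((1:ℝ), (0:ℝ)), (0:ℝ)) + y.2 • (((0:ℝ), (1:ℝ)), (0:ℝ)) := by
      simp [Prod.ext_iff]
    rw [this, map_add, map_smul, map_smul, smul_eq_mul, smul_eq_mul]
  set a : ℝ := ℓ ((1, 0), 0) with ha
  set b : ℝ := ℓ ((0, 1), 0) with hb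
  refine ⟨-a / s, -b / s, fun p' q' => ?_⟩
  have h := key (p', q')
  rw [hy0 (p', q'), hy0 x] at h
  simp only at h
  rw [← sub_nonneg]
  have H : f (p', q') - (f x + -a / s * (p' - x.1) + -b / s * (q' - x.2))
      = ((a * p' + b * q' + f (p', q') * s) - (a * x.1 + b * x.2 + f x * s)) / s := by
    field_simp
    ring
  rw [H]
  apply div_nonneg _ hspos.le
  linarith

theorem stmt7 (Δx w L C : ℝ) (hΔx : 0 < Δx) (hw : 0 ≤ w) (hL : 0 < L) (hC : 0 ≤ C)
    (f : ℝ × ℝ → ℝ) (hconv : ConvexOn ℝ Set.univ f)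
    (hmono : ∀ p q e : ℝ, 0 ≤ e → f (p, q + e) ≤ f (p, q) ∧ f (p, q) ≤ f (p + e, q))
    (hsubgrad : ∀ p q dp dq : ℝ,
      p ∈ Set.Icc (-(L + w * Δx)) (L + w * Δx) →
      q ∈ Set.Icc (-(L + w * Δx)) (L + w * Δx) →
      (∀ p' q' : ℝ, f (p, q) + dp * (p' - p) + dq * (q' - q) ≤ f (p', q')) →
      |dp| + |dq| ≤ C)
    (u : ℤ → ℝ)
    (hLip : ∀ i : ℤ, |u (i + 1) - u i| ≤ L * Δx)
    (hsc : ∀ i : ℤ, u (i - 1) - 2 * u i + u (i + 1) ≤ w * Δx ^ 2) :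
    (∀ i : ℤ,
      f ((u i - u (i - 1)) / Δx, (u i - u (i - 1)) / Δx) - Δx * w * C ≤
        f ((u i - u (i - 1)) / Δx, (u (i + 1) - u i) / Δx)) ∧
    ((∀ p : ℝ, |p| ≤ L → 0 ≤ f (p, p)) →
      ∀ i : ℤ, -(Δx * w * C) ≤ f ((u i - u (i - 1)) / Δx, (u (i + 1) - u i) / Δx)) := by
  have hpL : ∀ i : ℤ, |(u i - u (i - 1)) / Δx| ≤ L := by
    intro i
    have h := hLip (i - 1)
    have h1 : (i - 1 + 1 : ℤ) = i := by ring
    rw [h1] at h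
    rw [abs_div, abs_of_pos hΔx, div_le_iff₀ hΔx]
    linarith [h]
  have main : ∀ i : ℤ,
      f ((u i - u (i - 1)) / Δx, (u i - u (i - 1)) / Δx) - Δx * w * C ≤
        f ((u i - u (i - 1)) / Δx, (u (i + 1) - u i) / Δx) := by
    intro i
    set p : ℝ := (u i - u (i - 1)) / Δx with hp
    set q : ℝ := (u (i + 1) - u i) / Δx with hq
    -- q ≤ p + w * Δx
    have hqp : q ≤ p + w * Δx := by
      have h := hsc i
      rw [hq, hp, div_add' _ _ _ (ne_of_gt hΔx), div_le_div_iff₀ hΔx hΔx]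
      nlinarith [h]
    -- monotonicity: f (p, p + w*Δx) ≤ f (p, q)
    have hmq : f (p, p + w * Δx) ≤ f (p, q) := by
      have he : 0 ≤ p + w * Δx - q := by linarith
      have := (hmono p q (p + w * Δx - q) he).1
      have heq : q + (p + w * Δx - q) = p + w * Δx := by ring
      rwa [heq] at this
    -- subgradient at (p, p)
    obtain ⟨dp, dq, hsg⟩ := exists_subgrad hconv (p, p)
    have hpbox : p ∈ Set.Icc (-(L + w * Δx)) (L + w * Δx) := by
      have := hpL i
      rw [abs_le] at this
      constructor <;> nlinarith [mul_nonneg hw hΔx.le]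
    have hbound : |dp| + |dq| ≤ C := hsubgrad p p dp dq hpbox hpbox hsg
    have hsg' := hsg p (p + w * Δx)
    simp only at hsg'
    have hdq : -C ≤ dq := by
      have := abs_nonneg dp
      have := neg_abs_le dq
      linarith
    have hwd : 0 ≤ w * Δx := mul_nonneg hw hΔx.le
    have : f (p, p) - Δx * w * C ≤ f (p, p + w * Δx) := by
      have h1 : f (p, p) + dp * (p - p) + dq * (p + w * Δx - p) ≤ f (p, p + w * Δx) := hsg'
      have h2 : dq * (w * Δx) ≥ -C * (w * Δx) := mul_le_mul_of_nonneg_right hdq hwd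
      nlinarith
    linarith
  refine ⟨main, fun hpos i => ?_⟩
  have h1 := main i
  have h2 := hpos _ (hpL i)
  linarith
end

section
/- Concentration estimate forcing a small minimum: let Δx > 0, ψ_m, ψ_M > 0, a > 0, β ∈ ℝ, ε > 0, and v : ℤ → ℝ with v_i ≥ β + a·|i|·Δx for all i. Suppose Δx·Σ_{i∈ℤ} ψ(x_i)·e^{−v_i/ε} ≥ c > 0 with ψ_m ≤ ψ ≤ ψ_M. Then for every N ∈ ℕ, c ≤ (2N−1)·Δx·ψ_M·e^{−(min_i v_i)/ε} + 2·Δx·ψ_M·e^{−(β + a·N·Δx)/ε}/(1 − e^{−a·Δx/ε}); consequently, if the second term is at most c/2, then min_i v_i ≤ ε·ln(2(2N−1)Δx·ψ_M/c). -/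
/-! Every term `ψ i * exp (-v i / ε)` is at most `ψM * exp (-m / ε)` and, by coercivity, at most
`ψM * exp (-β / ε) * q ^ |i|` with `q = exp (-a * Δx / ε) < 1`. Using the first bound on the
`2N - 1` indices with `|i| < N` and the second on the two geometric tails gives the estimate.
When the tails contribute at most `c / 2`, the remaining `c / 2 ≤ (2N - 1) Δx ψM exp (-m / ε)`
is solved for `m` by taking logarithms. -/

open Real

section GeometricComparison

variable {A B q : ℝ}

lemma hasSum_ite_lt_geometric (hq0 : 0 ≤ q) (hq1 : q < 1) (N : ℕ) :
    HasSum (fun n : ℕ => if n < N then A else B * q ^ n) (N * A + B * q ^ N / (1 - q)) := by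
  refine (hasSum_nat_add_iff' N).mp ?_
  rw [Finset.sum_ite_of_true fun i hi => Finset.mem_range.mp hi, Finset.sum_const,
    Finset.card_range, nsmul_eq_mul, add_sub_cancel_left]
  have htail : (fun n : ℕ => if n + N < N then A else B * q ^ (n + N)) =
      fun n => B * q ^ N * q ^ n := by
    funext n
    rw [if_neg (by omega), pow_add]
    ring
  rw [htail, div_eq_mul_inv]
  exact (hasSum_geometric_of_lt_one hq0 hq1).mul_left _

lemma hasSum_int_ite_natAbs_lt_geometric (hq0 : 0 ≤ q) (hq1 : q < 1) {N : ℕ} (hN : 0 < N) :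
    HasSum (fun i : ℤ => if i.natAbs < N then A else B * q ^ i.natAbs)
      ((2 * N - 1) * A + 2 * (B * q ^ N / (1 - q))) := by
  have hnat := hasSum_ite_lt_geometric (A := A) (B := B) hq0 hq1 N
  have hneg := (hasSum_nat_add_iff' 1).mpr hnat
  have habs (n : ℕ) : (-(n + 1 : ℤ)).natAbs = n + 1 := by omega
  convert HasSum.of_nat_of_neg_add_one
    (f := fun i : ℤ => if i.natAbs < N then A else B * q ^ i.natAbs)
    (by simpa using hnat) (by simpa only [habs] using hneg) using 1
  simp [hN]
  ring

variable {f : ℤ → ℝ}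

lemma summable_of_le_geometric_natAbs (hq0 : 0 ≤ q) (hq1 : q < 1) (hf0 : ∀ i, 0 ≤ f i)
    (hfB : ∀ i, f i ≤ B * q ^ i.natAbs) : Summable f := by
  refine Summable.of_nonneg_of_le hf0 (fun i => ?_)
    (hasSum_int_ite_natAbs_lt_geometric (A := B) (B := B) hq0 hq1 zero_lt_one).summable
  split_ifs with hi
  · simpa [Int.natAbs_eq_zero.mp (Nat.lt_one_iff.mp hi)] using hfB i
  · exact hfB i

lemma tsum_le_of_le_of_le_geometric_natAbs (hq0 : 0 ≤ q) (hq1 : q < 1) (hf0 : ∀ i, 0 ≤ f i)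
    (hfA : ∀ i, f i ≤ A) (hfB : ∀ i, f i ≤ B * q ^ i.natAbs) (hAB : A ≤ B) (N : ℕ) :
    ∑' i, f i ≤ (2 * N - 1) * A + 2 * (B * q ^ N / (1 - q)) := by
  have hf := summable_of_le_geometric_natAbs hq0 hq1 hf0 hfB
  have key {N : ℕ} (hN : 0 < N) : ∑' i, f i ≤ (2 * N - 1) * A + 2 * (B * q ^ N / (1 - q)) := by
    have hg := hasSum_int_ite_natAbs_lt_geometric (A := A) (B := B) hq0 hq1 hN
    refine (hf.tsum_le_tsum (fun i => ?_) hg.summable).trans_eq hg.tsum_eq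
    split_ifs
    exacts [hfA i, hfB i]
  rcases N.eq_zero_or_pos with rfl | hN
  · -- the bound claimed for `N = 0` exceeds the one for `N = 1` by `2 * (B - A)`
    refine (key zero_lt_one).trans ?_
    have h1q : 0 < 1 - q := sub_pos.mpr hq1
    push_cast
    field_simp
    nlinarith
  · exact key hN

end GeometricComparison

lemma mul_exp_neg_div_le_mul_exp_neg_div {ψ ψM v w ε : ℝ} (hψ : ψ ≤ ψM) (hψM : 0 ≤ ψM)
    (hwv : w ≤ v) (hε : 0 < ε) : ψ * exp (-v / ε) ≤ ψM * exp (-w / ε) :=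
  mul_le_mul hψ (exp_le_exp.mpr (by gcongr)) (exp_pos _).le hψM

lemma exp_neg_add_mul_div (β s ε : ℝ) (n : ℕ) :
    exp (-(β + n * s) / ε) = exp (-β / ε) * exp (-s / ε) ^ n := by
  rw [← exp_nat_mul, ← exp_add]
  ring_nf

lemma le_mul_log_div_of_le_mul_exp {c K m ε : ℝ} (hc : 0 < c) (hε : 0 < ε)
    (h : c ≤ K * exp (-m / ε)) : m ≤ ε * log (K / c) := by
  have hK : 0 < K := pos_of_mul_pos_left (hc.trans_le h) (exp_pos _).le
  rw [← div_le_iff₀' hε, le_log_iff_exp_le (div_pos hK hc), le_div_iff₀' hc]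
  calc c * exp (m / ε) ≤ K * exp (-m / ε) * exp (m / ε) := by gcongr
    _ = K := by rw [mul_assoc, ← exp_add, neg_div, neg_add_cancel, exp_zero, mul_one]

theorem stmt17_general (Δx ε a β c ψm ψM m : ℝ)
    (hΔx : 0 < Δx) (hε : 0 < ε) (ha : 0 < a) (hc : 0 < c) (hψm : 0 < ψm)
    (ψ : ℤ → ℝ) (hψ : ∀ i, ψm ≤ ψ i ∧ ψ i ≤ ψM)
    (v : ℤ → ℝ) (hcoer : ∀ i : ℤ, β + a * |(i : ℝ)| * Δx ≤ v i)
    (hmin : ∀ i, m ≤ v i) (hmin' : ∃ j, v j = m)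
    (hmass : c ≤ Δx * ∑' i : ℤ, ψ i * Real.exp (-v i / ε)) :
    ∀ N : ℕ,
      c ≤ (2 * (N : ℝ) - 1) * Δx * ψM * Real.exp (-m / ε) +
          2 * Δx * ψM * Real.exp (-(β + a * N * Δx) / ε) /
            (1 - Real.exp (-a * Δx / ε)) ∧
      (2 * Δx * ψM * Real.exp (-(β + a * N * Δx) / ε) /
            (1 - Real.exp (-a * Δx / ε)) ≤ c / 2 →
        m ≤ ε * Real.log (2 * (2 * (N : ℝ) - 1) * Δx * ψM / c)) := by
  intro N
  have hψM : 0 ≤ ψM := hψm.le.trans ((hψ 0).1.trans (hψ 0).2)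
  have hβm : β ≤ m := by
    obtain ⟨j, rfl⟩ := hmin'
    have := mul_nonneg (mul_nonneg ha.le (abs_nonneg (j : ℝ))) hΔx.le
    linarith [hcoer j]
  have hq1 : exp (-a * Δx / ε) < 1 := by
    rw [exp_lt_one_iff, neg_mul, neg_div, neg_lt_zero]
    positivity
  have htail (n : ℕ) : exp (-(β + a * n * Δx) / ε) = exp (-β / ε) * exp (-a * Δx / ε) ^ n := by
    rw [neg_mul, ← exp_neg_add_mul_div]
    ring_nf
  have htsum := tsum_le_of_le_of_le_geometric_natAbs (f := fun i => ψ i * exp (-v i / ε))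
    (exp_pos _).le hq1 (fun i => mul_nonneg (hψm.trans_le (hψ i).1).le (exp_pos _).le)
    (fun i => mul_exp_neg_div_le_mul_exp_neg_div (hψ i).2 hψM (hmin i) hε)
    (fun i => by
      rw [mul_assoc, ← htail]
      refine mul_exp_neg_div_le_mul_exp_neg_div (hψ i).2 hψM ?_ hε
      simpa [Nat.cast_natAbs, mul_comm, mul_left_comm] using hcoer i)
    (mul_exp_neg_div_le_mul_exp_neg_div le_rfl hψM hβm hε) N
  have hbound : c ≤ (2 * (N : ℝ) - 1) * Δx * ψM * exp (-m / ε) +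
      2 * Δx * ψM * exp (-(β + a * N * Δx) / ε) / (1 - exp (-a * Δx / ε)) := by
    refine hmass.trans ((mul_le_mul_of_nonneg_left htsum hΔx.le).trans_eq ?_)
    rw [htail]
    ring
  refine ⟨hbound, fun hsmall => le_mul_log_div_of_le_mul_exp hc hε ?_⟩
  linarith

theorem stmt17 (Δx ε a β c ψm ψM m : ℝ)
    (hΔx : 0 < Δx) (hε : 0 < ε) (ha : 0 < a) (hc : 0 < c) (hψm : 0 < ψm)
    (ψ : ℤ → ℝ) (hψ : ∀ i, ψm ≤ ψ i ∧ ψ i ≤ ψM)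
    (v : ℤ → ℝ) (hcoer : ∀ i : ℤ, β + a * |(i : ℝ)| * Δx ≤ v i)
    (hmin : ∀ i, m ≤ v i) (hmin' : ∃ j, v j = m)
    (hsum : Summable (fun i : ℤ => ψ i * Real.exp (-v i / ε)))
    (hmass : c ≤ Δx * ∑' i : ℤ, ψ i * Real.exp (-v i / ε)) :
    ∀ N : ℕ,
      c ≤ (2 * (N : ℝ) - 1) * Δx * ψM * Real.exp (-m / ε) +
          2 * Δx * ψM * Real.exp (-(β + a * N * Δx) / ε) /
            (1 - Real.exp (-a * Δx / ε)) ∧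
      (2 * Δx * ψM * Real.exp (-(β + a * N * Δx) / ε) /
            (1 - Real.exp (-a * Δx / ε)) ≤ c / 2 →
        m ≤ ε * Real.log (2 * (2 * (N : ℝ) - 1) * Δx * ψM / c)) :=
  stmt17_general Δx ε a β c ψm ψM m hΔx hε ha hc hψm ψ hψ v hcoer hmin hmin' hmass
end
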